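/- arXiv:2208.03247 — 7 statements merged into one kernel-verified Lean document; each statement's English description precedes it below -/
import Mathlib

section
/- Let $x \in \mathbb{R}^d$, let $y$ be a probability vector with $y_i > 0$ for all $i$, and let $i_{\max}$ be an index achieving $\max_i x_i$. Then for any $\beta > 0$, $\max_{1 \le i \le d} x_i - \frac{\sum_{i=1}^d x_i y_i e^{\beta x_i}}{\sum_{j=1}^d y_j e^{\beta x_j}} \le \frac{1}{\beta} \log\left(\frac{1}{y_{i_{\max}}}\right)$. -/
open Finset Real

theorem stmt_0 {d : ℕ} (x y : Fin d → ℝ)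
    (hy : ∀ i, 0 < y i) (hysum : ∑ i, y i = 1)
    (imax : Fin d) (hmax : ∀ i, x i ≤ x imax)
    (β : ℝ) (hβ : 0 < β) :
    x imax - (∑ i, x i * y i * Real.exp (β * x i)) / (∑ j, y j * Real.exp (β * x j))
      ≤ (1 / β) * Real.log (1 / y imax) := by
  set S := ∑ j, y j * Real.exp (β * x j) with hS
  have hSpos : 0 < S :=
    Finset.sum_pos (fun j _ => mul_pos (hy j) (Real.exp_pos _)) ⟨imax, Finset.mem_univ _⟩
  set w : Fin d → ℝ := fun i => y i * Real.exp (β * x i) / S with hw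
  have hwpos : ∀ i, 0 < w i := fun i => div_pos (mul_pos (hy i) (Real.exp_pos _)) hSpos
  have hwsum : ∑ i, w i = 1 := by
    rw [hw, ← Finset.sum_div, ← hS, div_self hSpos.ne']
  have jensen : ∑ i, w i • Real.log (y i / w i) ≤ Real.log (∑ i, w i • (y i / w i)) :=
    (strictConcaveOn_log_Ioi.concaveOn).le_map_sum (fun i _ => (hwpos i).le) hwsum
      (fun i _ => Set.mem_Ioi.mpr (div_pos (hy i) (hwpos i)))
  have hrhs : ∑ i, w i • (y i / w i) = 1 := by
    simp only [smul_eq_mul]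
    rw [← hysum]
    refine Finset.sum_congr rfl fun i _ => ?_
    rw [mul_comm, div_mul_cancel₀ _ (hwpos i).ne']
  rw [hrhs, Real.log_one] at jensen
  have hlog : ∀ i, Real.log (y i / w i) = Real.log S - β * x i := by
    intro i
    have h1 : y i / w i = S / Real.exp (β * x i) := by
      rw [hw]
      rw [div_div_eq_mul_div, div_eq_div_iff (mul_pos (hy i) (Real.exp_pos _)).ne' (Real.exp_pos _).ne']
      ring
    rw [h1, Real.log_div hSpos.ne' (Real.exp_ne_zero _), Real.log_exp]
  have key : Real.log S ≤ β * ∑ i, w i * x i := by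
    have : ∑ i, w i • Real.log (y i / w i) = Real.log S - β * ∑ i, w i * x i := by
      simp only [smul_eq_mul, hlog, mul_sub]
      rw [Finset.sum_sub_distrib, ← Finset.sum_mul, hwsum, one_mul, Finset.mul_sum]
      congr 1
      refine Finset.sum_congr rfl fun i _ => ?_
      ring
    linarith [this ▸ jensen]
  have hSlb : Real.log (y imax) + β * x imax ≤ Real.log S := by
    have h1 : y imax * Real.exp (β * x imax) ≤ S :=
      Finset.single_le_sum (f := fun j => y j * Real.exp (β * x j))
        (fun j _ => (mul_pos (hy j) (Real.exp_pos _)).le) (Finset.mem_univ imax)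
    have h2 := Real.log_le_log (mul_pos (hy imax) (Real.exp_pos _)) h1
    rwa [Real.log_mul (hy imax).ne' (Real.exp_ne_zero _), Real.log_exp] at h2
  have havg : (∑ i, x i * y i * Real.exp (β * x i)) / S = ∑ i, w i * x i := by
    rw [Finset.sum_div]
    refine Finset.sum_congr rfl fun i _ => ?_
    rw [hw]
    ring
  rw [havg, one_div (y imax), Real.log_inv]
  rw [div_mul_eq_mul_div, le_div_iff₀ hβ]
  nlinarith [key, hSlb]
end

section
/- Consider a finite MDP with discount $\gamma \in (0,1)$. Suppose policies $\pi_t$, $Q$-estimates $Q_t$, and the next policies $\pi_{t+1}$ satisfy, for all $t$, $\|\mathcal{H}_{\pi_{t+1}}(Q_t) - \mathcal{H}(Q_t)\|_\infty \le \varepsilon_t$. Then the value-function errors $\zeta_t = \|Q^* - Q^{\pi_t}\|_\infty$ satisfy the recursion $\zeta_{t+1} \le \gamma \zeta_t + \frac{2\gamma\|Q^{\pi_t} - Q_t\|_\infty + \varepsilon_t}{1-\gamma}$, and hence $\zeta_T \le \gamma^T \zeta_0 + \frac{2\gamma}{1-\gamma}\sum_{t=0}^{T-1}\gamma^{T-1-t}\|Q^{\pi_t}-Q_t\|_\infty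 + \frac{1}{1-\gamma}\sum_{t=0}^{T-1}\gamma^{T-1-t}\varepsilon_t$. -/
open Finset

/-- The Bellman operator of a policy `π` on a finite MDP. -/
noncomputable def bellmanPolicy {S A : Type} [Fintype S] [Fintype A]
    (R : S → A → ℝ) (P : S → A → S → ℝ) (γ : ℝ) (π : S → A → ℝ)
    (Q : S × A → ℝ) : S × A → ℝ :=
  fun p => R p.1 p.2 + γ * ∑ s', P p.1 p.2 s' * ∑ a', π s' a' * Q (s', a')

/-- The Bellman optimality operator on a finite MDP. -/
noncomputable def bellmanOpt {S A : Type} [Fintype S] [Fintype A] [Nonempty A]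
    (R : S → A → ℝ) (P : S → A → S → ℝ) (γ : ℝ)
    (Q : S × A → ℝ) : S × A → ℝ :=
  fun p => R p.1 p.2 + γ * ∑ s', P p.1 p.2 s' *
    (Finset.univ.sup' Finset.univ_nonempty (fun a' => Q (s', a')))

/-!
Write `c = 2 γ ‖Q^{π_t} - Q_t‖ + ε_t`. Comparing at `Q_t` and moving back to `Q^{π_t}` with the
shift rule shows that `π_{t+1}` is greedy up to `c` for `Q^{π_t}`: `H Q^{π_t} ≤ H_{π_{t+1}} Q^{π_t} + c`.
Since `Q^{π_t} = H_{π_t} Q^{π_t} ≤ H Q^{π_t}`, evaluating at a point of maximal excess of `Q^{π_t}`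
over `Q^{π_{t+1}}` gives approximate policy improvement `Q^{π_t} ≤ Q^{π_{t+1}} + c / (1 - γ)`. Then
`Q^* = H Q^* ≤ H Q^{π_t} + γ ζ_t ≤ H_{π_{t+1}} Q^{π_t} + c + γ ζ_t ≤ Q^{π_{t+1}} + γ ζ_t + c / (1 - γ)`,
and since `Q^{π_{t+1}} ≤ Q^*` this is the recursion, which unrolls to the bound on `ζ_T`.
-/

lemma le_add_norm_sub {ι : Type*} [Fintype ι] (f g : ι → ℝ) (i : ι) : f i ≤ g i + ‖f - g‖ := by
  have h := norm_le_pi_norm (f - g) i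
  rw [Pi.sub_apply, Real.norm_eq_abs] at h
  linarith [le_abs_self (f i - g i)]

lemma weighted_sum_le_add {ι : Type*} [Fintype ι] {w f g : ι → ℝ} {d : ℝ}
    (hw : ∀ i, 0 ≤ w i) (hw1 : ∑ i, w i = 1) (h : ∀ i, f i ≤ g i + d) :
    ∑ i, w i * f i ≤ ∑ i, w i * g i + d := by
  calc ∑ i, w i * f i ≤ ∑ i, (w i * g i + w i * d) :=
        sum_le_sum fun i _ => by rw [← mul_add]; exact mul_le_mul_of_nonneg_left (h i) (hw i)
    _ = ∑ i, w i * g i + d := by rw [sum_add_distrib, ← sum_mul, hw1, one_mul]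

/-- Monotonicity and the shift rule `T (Q - c) = T Q - γ c` of the Bellman operators, combined into
one inequality. -/
def MonotoneDiscounted {ι : Type*} (γ : ℝ) (T : (ι → ℝ) → ι → ℝ) : Prop :=
  ∀ ⦃Q Q' : ι → ℝ⦄ ⦃d : ℝ⦄, (∀ i, Q i ≤ Q' i + d) → ∀ i, T Q i ≤ T Q' i + γ * d

namespace MonotoneDiscounted

/-- Approximate policy improvement. -/
lemma le_add_of_le_apply_add {ι : Type*} [Finite ι] {γ c : ℝ} {T : (ι → ℝ) → ι → ℝ} {V W : ι → ℝ}
    (hT : MonotoneDiscounted γ T) (hγ1 : γ < 1) (hV : T V = V) (hW : ∀ i, W i ≤ T W i + c)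
    (i : ι) : W i ≤ V i + c / (1 - γ) := by
  have : Nonempty ι := ⟨i⟩
  obtain ⟨j, hj⟩ := Finite.exists_max fun k => W k - V k
  set d := W j - V j
  have hWV : ∀ k, W k ≤ V k + d := fun k => by linarith [hj k]
  have hd : d ≤ γ * d + c := by
    have := hT hWV j
    rw [hV] at this
    linarith [hW j]
  have : d ≤ c / (1 - γ) := by
    rw [le_div_iff₀ (by linarith)]
    linarith
  linarith [hWV i]

variable {ι : Type*} [Fintype ι] {γ : ℝ} {T U : (ι → ℝ) → ι → ℝ}

lemma apply_le_add_norm (hT : MonotoneDiscounted γ T) (Q Q' : ι → ℝ) (i : ι) :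
    T Q i ≤ T Q' i + γ * ‖Q - Q'‖ :=
  hT (le_add_norm_sub Q Q') i

lemma le_add_of_norm_sub_le (hT : MonotoneDiscounted γ T) (hU : MonotoneDiscounted γ U)
    {Q Q' : ι → ℝ} {ε : ℝ} (hε : ‖U Q' - T Q'‖ ≤ ε) (i : ι) :
    T Q i ≤ U Q i + (2 * γ * ‖Q - Q'‖ + ε) := by
  have hTU : T Q' i ≤ U Q' i + ε := by
    have := le_add_norm_sub (T Q') (U Q') i
    rw [norm_sub_rev] at this
    linarith
  have h1 := hT.apply_le_add_norm Q Q' i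
  have h2 := hU.apply_le_add_norm Q' Q i
  rw [norm_sub_rev] at h2
  linarith

/-- `T` plays the optimality operator, `U` and `U'` the operators of the current and the next
policy, and `Q'` the estimate of `V`. -/
lemma norm_sub_le_of_approx_greedy {U' : (ι → ℝ) → ι → ℝ} {Qstar V V' Q' : ι → ℝ} {ε : ℝ}
    (hT : MonotoneDiscounted γ T) (hU' : MonotoneDiscounted γ U') (hγ0 : 0 ≤ γ) (hγ1 : γ < 1)
    (hUT : ∀ Q i, U Q i ≤ T Q i) (hQstar : T Qstar = Qstar) (hV : U V = V) (hV' : U' V' = V')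
    (hopt : ∀ i, V' i ≤ Qstar i) (hε : ‖U' Q' - T Q'‖ ≤ ε) :
    ‖Qstar - V'‖ ≤ γ * ‖Qstar - V‖ + (2 * γ * ‖V - Q'‖ + ε) / (1 - γ) := by
  set c := 2 * γ * ‖V - Q'‖ + ε
  have hε0 : 0 ≤ ε := (norm_nonneg _).trans hε
  have hc : 0 ≤ c := by positivity
  have greedy : ∀ i, T V i ≤ U' V i + c := hT.le_add_of_norm_sub_le hU' hε
  have improve : ∀ i, V i ≤ V' i + c / (1 - γ) :=
    hU'.le_add_of_le_apply_add hγ1 hV' fun i => by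
      linarith [congrFun hV i, hUT V i, greedy i]
  refine (pi_norm_le_iff_of_nonneg (by have := sub_pos.2 hγ1; positivity)).2 fun i => ?_
  have hpos : 0 ≤ Qstar i - V' i := sub_nonneg.2 (hopt i)
  rw [Pi.sub_apply, Real.norm_eq_abs, abs_of_nonneg hpos]
  have h1 := hT.apply_le_add_norm Qstar V i
  have h2 := hU' improve i
  have hgeom : c + γ * (c / (1 - γ)) = c / (1 - γ) := by
    field_simp [(sub_pos.2 hγ1).ne']
    ring
  rw [hQstar] at h1
  rw [hV'] at h2
  linarith [greedy i]

end MonotoneDiscounted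

lemma le_pow_mul_add_sum_of_le_mul_add {γ : ℝ} (hγ : 0 ≤ γ) {z b : ℕ → ℝ}
    (h : ∀ t, z (t + 1) ≤ γ * z t + b t) (T : ℕ) :
    z T ≤ γ ^ T * z 0 + ∑ t ∈ range T, γ ^ (T - 1 - t) * b t := by
  induction T with
  | zero => simp
  | succ T ih =>
    have hsum : ∑ t ∈ range (T + 1), γ ^ (T + 1 - 1 - t) * b t
        = γ * ∑ t ∈ range T, γ ^ (T - 1 - t) * b t + b T := by
      rw [sum_range_succ, mul_sum, Nat.add_sub_cancel, Nat.sub_self, pow_zero, one_mul]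
      congr 1
      refine sum_congr rfl fun t ht => ?_
      rw [show T - t = T - 1 - t + 1 by have := mem_range.1 ht; omega, pow_succ]
      ring
    rw [hsum, pow_succ]
    nlinarith [h T, mul_le_mul_of_nonneg_left ih hγ]

section MDP

variable {S A : Type} [Fintype S] [Fintype A] {R : S → A → ℝ} {P : S → A → S → ℝ} {γ : ℝ}

lemma monotoneDiscounted_bellmanPolicy (hγ : 0 ≤ γ) (hPpos : ∀ s a s', 0 ≤ P s a s')
    (hPsum : ∀ s a, ∑ s', P s a s' = 1) {π : S → A → ℝ} (hπpos : ∀ s a, 0 ≤ π s a)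
    (hπsum : ∀ s, ∑ a, π s a = 1) : MonotoneDiscounted γ (bellmanPolicy R P γ π) := by
  intro Q Q' d h p
  have key := weighted_sum_le_add (hPpos p.1 p.2) (hPsum p.1 p.2) fun s' =>
    weighted_sum_le_add (hπpos s') (hπsum s') fun a' => h (s', a')
  unfold bellmanPolicy
  linarith [mul_le_mul_of_nonneg_left key hγ]

lemma monotoneDiscounted_bellmanOpt [Nonempty A] (hγ : 0 ≤ γ) (hPpos : ∀ s a s', 0 ≤ P s a s')
    (hPsum : ∀ s a, ∑ s', P s a s' = 1) : MonotoneDiscounted γ (bellmanOpt R P γ) := by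
  intro Q Q' d h p
  have inner : ∀ s', univ.sup' univ_nonempty (fun a => Q (s', a))
      ≤ univ.sup' univ_nonempty (fun a => Q' (s', a)) + d := fun s' =>
    sup'_le _ _ fun a' _ =>
      (h (s', a')).trans (add_le_add_left (le_sup' (fun a => Q' (s', a)) (mem_univ a')) d)
  have key := weighted_sum_le_add (hPpos p.1 p.2) (hPsum p.1 p.2) inner
  unfold bellmanOpt
  linarith [mul_le_mul_of_nonneg_left key hγ]

lemma bellmanPolicy_le_bellmanOpt [Nonempty A] (hγ : 0 ≤ γ) (hPpos : ∀ s a s', 0 ≤ P s a s')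
    {π : S → A → ℝ} (hπpos : ∀ s a, 0 ≤ π s a) (hπsum : ∀ s, ∑ a, π s a = 1)
    (Q : S × A → ℝ) (p : S × A) : bellmanPolicy R P γ π Q p ≤ bellmanOpt R P γ Q p := by
  unfold bellmanPolicy bellmanOpt
  gcongr with s'
  · exact hPpos _ _ _
  calc ∑ a', π s' a' * Q (s', a') ≤ ∑ a', π s' a' * univ.sup' univ_nonempty (fun a => Q (s', a)) :=
        sum_le_sum fun a' _ =>
          mul_le_mul_of_nonneg_left (le_sup' (fun a => Q (s', a)) (mem_univ a')) (hπpos s' a')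
    _ = univ.sup' univ_nonempty (fun a => Q (s', a)) := by rw [← sum_mul, hπsum, one_mul]

end MDP

theorem stmt_7_general {S A : Type} [Fintype S] [Fintype A] [Nonempty A]
    (R : S → A → ℝ) (P : S → A → S → ℝ) (γ : ℝ) (hγ : γ ∈ Set.Ioo (0:ℝ) 1)
    (hPpos : ∀ s a s', 0 ≤ P s a s') (hPsum : ∀ s a, ∑ s', P s a s' = 1)
    (π : ℕ → S → A → ℝ)
    (hπpos : ∀ t s a, 0 ≤ π t s a) (hπsum : ∀ t s, ∑ a, π t s a = 1)
    (Qpi : ℕ → S × A → ℝ)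
    (hQpi : ∀ t, bellmanPolicy R P γ (π t) (Qpi t) = Qpi t)
    (Qstar : S × A → ℝ) (hQstar : bellmanOpt R P γ Qstar = Qstar)
    (hopt : ∀ t p, Qpi t p ≤ Qstar p)
    (Qt : ℕ → S × A → ℝ) (ε : ℕ → ℝ)
    (hε : ∀ t, ‖bellmanPolicy R P γ (π (t+1)) (Qt t) - bellmanOpt R P γ (Qt t)‖ ≤ ε t) :
    (∀ t, ‖Qstar - Qpi (t+1)‖ ≤ γ * ‖Qstar - Qpi t‖
        + (2 * γ * ‖Qpi t - Qt t‖ + ε t) / (1 - γ))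
    ∧ (∀ T : ℕ, ‖Qstar - Qpi T‖ ≤ γ ^ T * ‖Qstar - Qpi 0‖
        + (2 * γ / (1 - γ)) * ∑ t ∈ Finset.range T, γ ^ (T - 1 - t) * ‖Qpi t - Qt t‖
        + (1 / (1 - γ)) * ∑ t ∈ Finset.range T, γ ^ (T - 1 - t) * ε t) := by
  obtain ⟨hγ0, hγ1⟩ := hγ
  have step : ∀ t, ‖Qstar - Qpi (t+1)‖ ≤ γ * ‖Qstar - Qpi t‖
      + (2 * γ * ‖Qpi t - Qt t‖ + ε t) / (1 - γ) := fun t =>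
    (monotoneDiscounted_bellmanOpt hγ0.le hPpos hPsum).norm_sub_le_of_approx_greedy
      (monotoneDiscounted_bellmanPolicy hγ0.le hPpos hPsum (hπpos (t + 1)) (hπsum (t + 1)))
      hγ0.le hγ1 (bellmanPolicy_le_bellmanOpt hγ0.le hPpos (hπpos t) (hπsum t))
      hQstar (hQpi t) (hQpi (t + 1)) (hopt (t + 1)) (hε t)
  refine ⟨step, fun T => (le_pow_mul_add_sum_of_le_mul_add (z := fun t => ‖Qstar - Qpi t‖)
    (b := fun t => (2 * γ * ‖Qpi t - Qt t‖ + ε t) / (1 - γ)) hγ0.le step T).trans_eq ?_⟩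
  rw [mul_sum, mul_sum, add_assoc, ← sum_add_distrib]
  congr 1
  exact sum_congr rfl fun t _ => by ring

theorem stmt_7 {S A : Type} [Fintype S] [Fintype A] [Nonempty S] [Nonempty A]
    (R : S → A → ℝ) (P : S → A → S → ℝ) (γ : ℝ) (hγ : γ ∈ Set.Ioo (0:ℝ) 1)
    (hPpos : ∀ s a s', 0 ≤ P s a s') (hPsum : ∀ s a, ∑ s', P s a s' = 1)
    (π : ℕ → S → A → ℝ)
    (hπpos : ∀ t s a, 0 ≤ π t s a) (hπsum : ∀ t s, ∑ a, π t s a = 1)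
    (Qpi : ℕ → S × A → ℝ)
    (hQpi : ∀ t, bellmanPolicy R P γ (π t) (Qpi t) = Qpi t)
    (Qstar : S × A → ℝ) (hQstar : bellmanOpt R P γ Qstar = Qstar)
    (hopt : ∀ t p, Qpi t p ≤ Qstar p)
    (Qt : ℕ → S × A → ℝ) (ε : ℕ → ℝ)
    (hε : ∀ t, ‖bellmanPolicy R P γ (π (t+1)) (Qt t) - bellmanOpt R P γ (Qt t)‖ ≤ ε t) :
    (∀ t, ‖Qstar - Qpi (t+1)‖ ≤ γ * ‖Qstar - Qpi t‖
        + (2 * γ * ‖Qpi t - Qt t‖ + ε t) / (1 - γ))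
    ∧ (∀ T : ℕ, ‖Qstar - Qpi T‖ ≤ γ ^ T * ‖Qstar - Qpi 0‖
        + (2 * γ / (1 - γ)) * ∑ t ∈ Finset.range T, γ ^ (T - 1 - t) * ‖Qpi t - Qt t‖
        + (1 / (1 - γ)) * ∑ t ∈ Finset.range T, γ ^ (T - 1 - t) * ε t) :=
  stmt_7_general R P γ hγ hPpos hPsum π hπpos hπsum Qpi hQpi Qstar hQstar hopt Qt ε hε
end

section
/- Consider the natural policy gradient update with exact $Q$-function $Q_t$: $\pi_{t+1}(a|s) \propto \pi_t(a|s)\exp(\beta_t Q_t(s,a))$. Then for every state-action pair $(s,a)$, $0 \le [\mathcal{H}(Q_t)](s,a) - [\mathcal{H}_{\pi_{t+1}}(Q_t)](s,a) \le \frac{\gamma}{\beta_t} \max_{s'} \log\left(\frac{1}{\pi_t(a_{t,s'}|s')}\right)$, where $a_{t,s'} \in \arg\max_{a'} Q_t(s',a')$. -/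
/-!
Writing `p = w e^{β x} / Z` for the policy after the update, `Z = ∑ w e^{β x}`, Jensen's
inequality for `exp` under `p` gives `e^{-β 𝔼_p x} ≤ ∑ p e^{-β x} = 1 / Z`, so
`w_m e^{β x_m} ≤ Z ≤ e^{β 𝔼_p x}`, i.e. `x_m - 𝔼_p x ≤ log (1 / w_m) / β`. Averaging this
gap over the successor states gives the bound on `𝓗 Q - 𝓗_π Q`.
-/

open Finset

section Tilted

variable {ι : Type*} [Fintype ι] (w : ι → ℝ) (β : ℝ) (x : ι → ℝ)

noncomputable def tiltedWeights (i : ι) : ℝ :=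
  w i * Real.exp (β * x i) / ∑ j, w j * Real.exp (β * x j)

variable {w} [Nonempty ι] (hw : ∀ i, 0 < w i)
include hw

lemma sum_mul_exp_pos : 0 < ∑ j, w j * Real.exp (β * x j) :=
  sum_pos (fun j _ => mul_pos (hw j) (Real.exp_pos _)) univ_nonempty

lemma tiltedWeights_pos (i : ι) : 0 < tiltedWeights w β x i :=
  div_pos (mul_pos (hw i) (Real.exp_pos _)) (sum_mul_exp_pos β x hw)

lemma sum_tiltedWeights : ∑ i, tiltedWeights w β x i = 1 := by
  simp only [tiltedWeights]
  rw [← sum_div, div_self (sum_mul_exp_pos β x hw).ne']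

lemma sum_tiltedWeights_mul_le {m : ι} (hm : ∀ i, x i ≤ x m) :
    ∑ i, tiltedWeights w β x i * x i ≤ x m :=
  calc ∑ i, tiltedWeights w β x i * x i ≤ ∑ i, tiltedWeights w β x i * x m :=
        sum_le_sum fun i _ => mul_le_mul_of_nonneg_left (hm i) (tiltedWeights_pos β x hw i).le
    _ = x m := by rw [← sum_mul, sum_tiltedWeights β x hw, one_mul]

lemma sum_mul_exp_le_exp_mul_sum_tiltedWeights_mul (hw1 : ∑ i, w i = 1) :
    ∑ j, w j * Real.exp (β * x j) ≤ Real.exp (β * ∑ i, tiltedWeights w β x i * x i) := by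
  have hjensen : Real.exp (∑ i, tiltedWeights w β x i * (-β * x i))
      ≤ ∑ i, tiltedWeights w β x i * Real.exp (-β * x i) :=
    convexOn_exp.map_sum_le (fun i _ => (tiltedWeights_pos β x hw i).le)
      (sum_tiltedWeights β x hw) (fun _ _ => Set.mem_univ _)
  have hinv : ∑ i, tiltedWeights w β x i * Real.exp (-β * x i)
      = (∑ j, w j * Real.exp (β * x j))⁻¹ := by
    simp only [tiltedWeights, div_mul_eq_mul_div, mul_assoc, ← Real.exp_add]
    rw [← sum_div]
    simp only [neg_mul, add_neg_cancel, Real.exp_zero, mul_one, hw1, one_div]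
  have hmean : ∑ i, tiltedWeights w β x i * (-β * x i)
      = -(β * ∑ i, tiltedWeights w β x i * x i) := by
    rw [mul_sum, ← sum_neg_distrib]
    exact sum_congr rfl fun i _ => by ring
  rw [hinv, hmean, Real.exp_neg] at hjensen
  exact (inv_le_inv₀ (Real.exp_pos _) (sum_mul_exp_pos β x hw)).mp hjensen

lemma sub_sum_tiltedWeights_mul_le (hw1 : ∑ i, w i = 1) (hβ : 0 < β) (m : ι) :
    x m - ∑ i, tiltedWeights w β x i * x i ≤ Real.log (1 / w m) / β := by
  have hterm : w m * Real.exp (β * x m) ≤ ∑ j, w j * Real.exp (β * x j) :=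
    single_le_sum (f := fun j => w j * Real.exp (β * x j))
      (fun j _ => (mul_pos (hw j) (Real.exp_pos _)).le) (mem_univ m)
  have hlog : Real.log (w m) + β * x m ≤ β * ∑ i, tiltedWeights w β x i * x i := by
    rw [← Real.log_exp (β * x m), ← Real.log_mul (hw m).ne' (Real.exp_ne_zero _),
      Real.log_le_iff_le_exp (mul_pos (hw m) (Real.exp_pos _))]
    exact hterm.trans (sum_mul_exp_le_exp_mul_sum_tiltedWeights_mul β x hw hw1)
  rw [le_div_iff₀ hβ, one_div, Real.log_inv]
  linarith

end Tilted

lemma bellmanOpt_sub_bellmanPolicy {S A : Type} [Fintype S] [Fintype A] [Nonempty A]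
    (R : S → A → ℝ) (P : S → A → S → ℝ) (γ : ℝ) (π : S → A → ℝ) (Q : S × A → ℝ) (p : S × A) :
    bellmanOpt R P γ Q p - bellmanPolicy R P γ π Q p
      = γ * ∑ s', P p.1 p.2 s' * (univ.sup' univ_nonempty (fun a' => Q (s', a'))
          - ∑ a', π s' a' * Q (s', a')) := by
  simp only [bellmanOpt, bellmanPolicy, mul_sub, sum_sub_distrib]
  ring

theorem stmt_10 {S A : Type} [Fintype S] [Fintype A] [Nonempty S] [Nonempty A]
    (R : S → A → ℝ) (P : S → A → S → ℝ) (γ : ℝ) (hγ : γ ∈ Set.Ioo (0:ℝ) 1)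
    (hPpos : ∀ s a s', 0 ≤ P s a s') (hPsum : ∀ s a, ∑ s', P s a s' = 1)
    (πt : S → A → ℝ) (hπpos : ∀ s a, 0 < πt s a) (hπsum : ∀ s, ∑ a, πt s a = 1)
    (Qt : S × A → ℝ) (βt : ℝ) (hβt : 0 < βt)
    (πt1 : S → A → ℝ)
    (hπt1 : ∀ s a, πt1 s a
      = πt s a * Real.exp (βt * Qt (s, a))
        / ∑ a', πt s a' * Real.exp (βt * Qt (s, a')))
    (ats : S → A) (hats : ∀ s a, Qt (s, a) ≤ Qt (s, ats s)) :
    ∀ p : S × A,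
      0 ≤ bellmanOpt R P γ Qt p - bellmanPolicy R P γ πt1 Qt p
      ∧ bellmanOpt R P γ Qt p - bellmanPolicy R P γ πt1 Qt p
          ≤ (γ / βt) * Finset.univ.sup' Finset.univ_nonempty
              (fun s' => Real.log (1 / πt s' (ats s'))) := by
  intro p
  have hπt1_eq : ∀ s', πt1 s' = tiltedWeights (πt s') βt (fun a => Qt (s', a)) :=
    fun s' => funext (hπt1 s')
  have hsup : ∀ s', univ.sup' univ_nonempty (fun a' => Qt (s', a')) = Qt (s', ats s') :=
    fun s' => le_antisymm (sup'_le _ _ fun a' _ => hats s' a')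
      (le_sup' (fun a' => Qt (s', a')) (mem_univ _))
  set B := univ.sup' univ_nonempty (fun s' => Real.log (1 / πt s' (ats s')))
  have hgap : ∀ s', 0 ≤ Qt (s', ats s') - ∑ a', πt1 s' a' * Qt (s', a')
      ∧ Qt (s', ats s') - ∑ a', πt1 s' a' * Qt (s', a') ≤ B / βt := by
    intro s'
    rw [hπt1_eq]
    refine ⟨sub_nonneg.mpr (sum_tiltedWeights_mul_le βt _ (hπpos s') (hats s')), ?_⟩
    refine (sub_sum_tiltedWeights_mul_le βt (fun a => Qt (s', a)) (hπpos s') (hπsum s') hβt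
      (ats s')).trans ?_
    exact div_le_div_of_nonneg_right (le_sup' (fun s' => Real.log (1 / πt s' (ats s')))
      (mem_univ s')) hβt.le
  simp only [bellmanOpt_sub_bellmanPolicy, hsup]
  constructor
  · exact mul_nonneg hγ.1.le (sum_nonneg fun s' _ => mul_nonneg (hPpos _ _ s') (hgap s').1)
  · calc γ * ∑ s', P p.1 p.2 s' * (Qt (s', ats s') - ∑ a', πt1 s' a' * Qt (s', a'))
        ≤ γ * ∑ s', P p.1 p.2 s' * (B / βt) :=
          mul_le_mul_of_nonneg_left (sum_le_sum fun s' _ =>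
            mul_le_mul_of_nonneg_left (hgap s').2 (hPpos _ _ s')) hγ.1.le
      _ = γ / βt * B := by rw [← sum_mul, hPsum]; ring
end

section
/- Consider the Boltzmann softmax policy update $\pi_{t+1}(a|s) = \exp(\beta_t Q_t(s,a))/\sum_{a'}\exp(\beta_t Q_t(s,a'))$ on a finite MDP. Then for every $(s,a)$, $0 \le [\mathcal{H}(Q_t)](s,a) - [\mathcal{H}_{\pi_{t+1}}(Q_t)](s,a) \le \frac{\gamma \log |\mathcal{A}|}{\beta_t}$. -/
open Finset

/-- Entropy bound: `-∑ p log p ≤ log n` for a positive probability vector. -/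
lemma neg_log_card_le_sum_mul_log {A : Type} [Fintype A]
    (p : A → ℝ) (hp : ∀ a, 0 < p a) (hsum : ∑ a, p a = 1) :
    -Real.log (Fintype.card A) ≤ ∑ a, p a * Real.log (p a) := by
  have hJ := (strictConcaveOn_log_Ioi.concaveOn).le_map_sum
    (t := Finset.univ) (w := p) (p := fun a => (p a)⁻¹)
    (fun a _ => (hp a).le) hsum
    (fun a _ => Set.mem_Ioi.2 (inv_pos.2 (hp a)))
  simp only [smul_eq_mul] at hJ
  have h1 : ∑ a, p a * (p a)⁻¹ = (Fintype.card A : ℝ) := by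
    rw [Finset.sum_congr rfl fun a _ => mul_inv_cancel₀ (hp a).ne']
    simp [Finset.card_univ]
  have h2 : ∑ a, p a * Real.log (p a)⁻¹ = -∑ a, p a * Real.log (p a) := by
    rw [← Finset.sum_neg_distrib]
    exact Finset.sum_congr rfl fun a _ => by rw [Real.log_inv]; ring
  rw [h1, h2] at hJ
  linarith

lemma softmax_bounds {A : Type} [Fintype A] [Nonempty A]
    (f : A → ℝ) (β : ℝ) (hβ : 0 < β) :
    (∑ a, (Real.exp (β * f a) / ∑ a', Real.exp (β * f a')) * f a)
      ≤ Finset.univ.sup' Finset.univ_nonempty f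
    ∧ Finset.univ.sup' Finset.univ_nonempty f - Real.log (Fintype.card A) / β
      ≤ ∑ a, (Real.exp (β * f a) / ∑ a', Real.exp (β * f a')) * f a := by
  set Z := ∑ a', Real.exp (β * f a') with hZ
  have hZpos : 0 < Z := Finset.sum_pos (fun a _ => Real.exp_pos _) Finset.univ_nonempty
  set p : A → ℝ := fun a => Real.exp (β * f a) / Z with hpdef
  have hppos : ∀ a, 0 < p a := fun a => div_pos (Real.exp_pos _) hZpos
  have hpsum : ∑ a, p a = 1 := by
    rw [← Finset.sum_div, ← hZ, div_self hZpos.ne']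
  set M := Finset.univ.sup' Finset.univ_nonempty f with hM
  constructor
  · calc ∑ a, p a * f a ≤ ∑ a, p a * M :=
          Finset.sum_le_sum fun a _ => mul_le_mul_of_nonneg_left
            (Finset.le_sup' f (Finset.mem_univ a)) (hppos a).le
      _ = M := by rw [← Finset.sum_mul, hpsum, one_mul]
  · have hlogp : ∀ a, Real.log (p a) = β * f a - Real.log Z := fun a => by
      rw [hpdef, Real.log_div (Real.exp_pos _).ne' hZpos.ne', Real.log_exp]
    have hZge : Real.exp (β * M) ≤ Z := by
      obtain ⟨a, _, ha⟩ := Finset.exists_mem_eq_sup' Finset.univ_nonempty f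
      calc Real.exp (β * M) = Real.exp (β * f a) := by rw [hM, ha]
        _ ≤ Z := by
            rw [hZ]
            exact Finset.single_le_sum (f := fun a' => Real.exp (β * f a'))
              (fun a' _ => (Real.exp_pos _).le) (Finset.mem_univ a)
    have hlogZ : β * M ≤ Real.log Z := by
      rw [← Real.log_exp (β * M)]
      exact Real.log_le_log (Real.exp_pos _) hZge
    have hent := neg_log_card_le_sum_mul_log p hppos hpsum
    have key : β * ∑ a, p a * f a = (∑ a, p a * Real.log (p a)) + Real.log Z := by
      rw [Finset.mul_sum]
      have : ∀ a, p a * Real.log (p a) = p a * (β * f a) - p a * Real.log Z :=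
        fun a => by rw [hlogp a]; ring
      simp_rw [this, Finset.sum_sub_distrib, ← Finset.sum_mul, hpsum]
      simp [mul_comm β, mul_assoc]
    have : β * M - Real.log (Fintype.card A) ≤ β * ∑ a, p a * f a := by
      rw [key]; linarith
    have goal : β * (M - Real.log (Fintype.card A) / β) ≤ β * ∑ a, p a * f a := by
      rw [mul_sub, mul_div_cancel₀ _ hβ.ne']
      linarith
    have := le_of_mul_le_mul_left (by linarith : β * (M - Real.log (Fintype.card A) / β) ≤ β * ∑ a, p a * f a) hβ
    simpa [hpdef] using (by linarith : M - Real.log (Fintype.card A) / β ≤ ∑ a, p a * f a)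

theorem stmt_11 {S A : Type} [Fintype S] [Fintype A] [Nonempty A]
    (R : S → A → ℝ) (P : S → A → S → ℝ) (γ : ℝ) (hγ : γ ∈ Set.Ioo (0:ℝ) 1)
    (hPpos : ∀ s a s', 0 ≤ P s a s') (hPsum : ∀ s a, ∑ s', P s a s' = 1)
    (Qt : S × A → ℝ) (βt : ℝ) (hβt : 0 < βt)
    (πt1 : S → A → ℝ)
    (hπt1 : ∀ s a, πt1 s a
      = Real.exp (βt * Qt (s, a)) / ∑ a', Real.exp (βt * Qt (s, a'))) :
    ∀ p : S × A,
      0 ≤ bellmanOpt R P γ Qt p - bellmanPolicy R P γ πt1 Qt p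
      ∧ bellmanOpt R P γ Qt p - bellmanPolicy R P γ πt1 Qt p
          ≤ γ * Real.log (Fintype.card A) / βt := by
  intro q
  obtain ⟨s, a⟩ := q
  have hγ0 : 0 < γ := hγ.1
  -- per-state difference
  set D : S → ℝ := fun s' =>
    Finset.univ.sup' Finset.univ_nonempty (fun a' => Qt (s', a'))
      - ∑ a', πt1 s' a' * Qt (s', a') with hD
  have hDb : ∀ s', 0 ≤ D s' ∧ D s' ≤ Real.log (Fintype.card A) / βt := by
    intro s'
    have h := softmax_bounds (fun a' => Qt (s', a')) βt hβt
    have heq : ∑ a', πt1 s' a' * Qt (s', a')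
        = ∑ a', (Real.exp (βt * Qt (s', a')) / ∑ a'', Real.exp (βt * Qt (s', a''))) * Qt (s', a') :=
      Finset.sum_congr rfl fun a' _ => by rw [hπt1]
    constructor
    · simp only [hD]; rw [heq]; linarith [h.1]
    · simp only [hD]; rw [heq]; linarith [h.2]
  have hdiff : bellmanOpt R P γ Qt (s, a) - bellmanPolicy R P γ πt1 Qt (s, a)
      = γ * ∑ s', P s a s' * D s' := by
    simp only [bellmanOpt, bellmanPolicy, hD]
    rw [add_sub_add_left_eq_sub, ← mul_sub, ← Finset.sum_sub_distrib]
    congr 1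
    exact Finset.sum_congr rfl fun s' _ => by ring
  rw [hdiff]
  constructor
  · exact mul_nonneg hγ0.le (Finset.sum_nonneg fun s' _ =>
      mul_nonneg (hPpos s a s') (hDb s').1)
  · have : ∑ s', P s a s' * D s' ≤ Real.log (Fintype.card A) / βt := by
      calc ∑ s', P s a s' * D s'
          ≤ ∑ s', P s a s' * (Real.log (Fintype.card A) / βt) :=
            Finset.sum_le_sum fun s' _ =>
              mul_le_mul_of_nonneg_left (hDb s').2 (hPpos s a s')
        _ = Real.log (Fintype.card A) / βt := by
            rw [← Finset.sum_mul, hPsum, one_mul]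
    calc γ * ∑ s', P s a s' * D s' ≤ γ * (Real.log (Fintype.card A) / βt) :=
          mul_le_mul_of_nonneg_left this hγ0.le
      _ = γ * Real.log (Fintype.card A) / βt := by ring
end

section
/- Consider the $\epsilon$-greedy policy update: given $Q_t$ and state-dependent parameters $\beta_{t,s} \in (0,1]$, let $\pi_{t+1}(a|s) = \beta_{t,s}/|\mathcal{A}|$ if $a \neq a_{t,s}$ and $\pi_{t+1}(a_{t,s}|s) = \beta_{t,s}/|\mathcal{A}| + 1 - \beta_{t,s}$, where $a_{t,s} = \arg\max_{a'} Q_t(s,a')$. Then for every $(s,a)$, $0 \le [\mathcal{H}(Q_t)](s,a) - [\mathcal{H}_{\pi_{t+1}}(Q_t)](s,a) \le 2\gamma \max_{s'} \beta_{t,s'} \max_{a'}|Q_t(s',a')|$. -/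
open Finset

theorem stmt_12 {S A : Type} [Fintype S] [Fintype A] [Nonempty S] [Nonempty A]
    [DecidableEq A]
    (R : S → A → ℝ) (P : S → A → S → ℝ) (γ : ℝ) (hγ : γ ∈ Set.Ioo (0:ℝ) 1)
    (hPpos : ∀ s a s', 0 ≤ P s a s') (hPsum : ∀ s a, ∑ s', P s a s' = 1)
    (Qt : S × A → ℝ) (β : S → ℝ) (hβ : ∀ s, β s ∈ Set.Ioc (0:ℝ) 1)
    (ats : S → A) (hats : ∀ s a, Qt (s, a) ≤ Qt (s, ats s))
    (πt1 : S → A → ℝ)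
    (hπt1 : ∀ s a, πt1 s a
      = if a = ats s then β s / (Fintype.card A) + 1 - β s
        else β s / (Fintype.card A)) :
    ∀ p : S × A,
      0 ≤ bellmanOpt R P γ Qt p - bellmanPolicy R P γ πt1 Qt p
      ∧ bellmanOpt R P γ Qt p - bellmanPolicy R P γ πt1 Qt p
          ≤ 2 * γ * Finset.univ.sup' Finset.univ_nonempty
              (fun s' => β s' * Finset.univ.sup' Finset.univ_nonempty
                (fun a' => |Qt (s', a')|)) := by
  obtain ⟨hγ0, hγ1⟩ := hγ
  have hn : (0:ℝ) < (Fintype.card A : ℝ) := by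
    exact_mod_cast Fintype.card_pos
  set n : ℝ := (Fintype.card A : ℝ) with hndef
  -- sup of Qt at s' equals Qt at the argmax
  have hsup : ∀ s', Finset.univ.sup' Finset.univ_nonempty (fun a' => Qt (s', a'))
      = Qt (s', ats s') := by
    intro s'
    apply le_antisymm
    · exact Finset.sup'_le _ _ (fun a _ => hats s' a)
    · exact Finset.le_sup' (fun a' => Qt (s', a')) (Finset.mem_univ (ats s'))
  have hpol : ∀ s', ∑ a', πt1 s' a' * Qt (s', a')
      = (β s' / n) * ∑ a', Qt (s', a') + (1 - β s') * Qt (s', ats s') := by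
    intro s'
    have key : ∀ a', πt1 s' a' * Qt (s', a')
        = (β s' / n) * Qt (s', a')
          + (if a' = ats s' then (1 - β s') * Qt (s', a') else 0) := by
      intro a'
      rw [hπt1]
      by_cases h : a' = ats s' <;> simp [h] <;> ring
    rw [Finset.sum_congr rfl (fun a _ => key a), Finset.sum_add_distrib,
      ← Finset.mul_sum, Finset.sum_ite_eq' Finset.univ (ats s')]
    simp
  -- per-state difference
  set d : S → ℝ := fun s' => Qt (s', ats s') - ∑ a', πt1 s' a' * Qt (s', a') with hd
  set M : S → ℝ := fun s' =>
    Finset.univ.sup' Finset.univ_nonempty (fun a' => |Qt (s', a')|) with hM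
  have hMabs : ∀ s' a', |Qt (s', a')| ≤ M s' := fun s' a' =>
    Finset.le_sup' (fun a' => |Qt (s', a')|) (Finset.mem_univ a')
  have hd0 : ∀ s', 0 ≤ d s' := by
    intro s'
    have hsum : ∑ a', Qt (s', a') ≤ n * Qt (s', ats s') := by
      calc ∑ a', Qt (s', a') ≤ ∑ _a' : A, Qt (s', ats s') :=
            Finset.sum_le_sum (fun a _ => hats s' a)
        _ = n * Qt (s', ats s') := by
            rw [Finset.sum_const, Finset.card_univ, nsmul_eq_mul]
    have hb := hβ s'
    have hnn : 0 ≤ β s' / n := div_nonneg hb.1.le hn.le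
    have h4 : (β s' / n) * ∑ a', Qt (s', a') ≤ (β s' / n) * (n * Qt (s', ats s')) :=
      mul_le_mul_of_nonneg_left hsum hnn
    have heq : (β s' / n) * (n * Qt (s', ats s')) = β s' * Qt (s', ats s') := by
      field_simp
    simp only [hd, hpol]
    linarith [heq ▸ h4]
  have hdle : ∀ s', d s' ≤ 2 * (β s' * M s') := by
    intro s'
    have hb := hβ s'
    have h1 : Qt (s', ats s') ≤ M s' := le_trans (le_abs_self _) (hMabs s' (ats s'))
    have h2 : -(n * M s') ≤ ∑ a', Qt (s', a') := by
      calc -(n * M s') = ∑ _a' : A, -(M s') := by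
            rw [Finset.sum_const, Finset.card_univ, nsmul_eq_mul]; ring
        _ ≤ ∑ a', Qt (s', a') :=
            Finset.sum_le_sum (fun a _ => by
              linarith [neg_abs_le (Qt (s', a)), hMabs s' a])
    have hnn : 0 ≤ β s' / n := div_nonneg hb.1.le hn.le
    have h3 : (β s' / n) * (-(n * M s')) ≤ (β s' / n) * ∑ a', Qt (s', a') :=
      mul_le_mul_of_nonneg_left h2 hnn
    simp only [hd, hpol]
    have hn' : n ≠ 0 := ne_of_gt hn
    have heq : (β s' / n) * (-(n * M s')) = -(β s' * M s') := by
      field_simp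
    nlinarith [hb.1, mul_le_mul_of_nonneg_left h1 hb.1.le, heq ▸ h3]
  -- rewrite the goal
  intro p
  set K : ℝ := Finset.univ.sup' Finset.univ_nonempty
      (fun s' => β s' * M s') with hK
  have hdiff : bellmanOpt R P γ Qt p - bellmanPolicy R P γ πt1 Qt p
      = γ * ∑ s', P p.1 p.2 s' * d s' := by
    simp only [bellmanOpt, bellmanPolicy, hd]
    have e1 : (∑ s', P p.1 p.2 s' * Finset.univ.sup' Finset.univ_nonempty
        (fun a' => Qt (s', a'))) = ∑ s', P p.1 p.2 s' * Qt (s', ats s') :=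
      Finset.sum_congr rfl fun s' _ => by rw [hsup]
    have e2 : ∑ s', P p.1 p.2 s' * (Qt (s', ats s') - ∑ a', πt1 s' a' * Qt (s', a'))
        = (∑ s', P p.1 p.2 s' * Qt (s', ats s'))
          - ∑ s', P p.1 p.2 s' * ∑ a', πt1 s' a' * Qt (s', a') := by
      rw [← Finset.sum_sub_distrib]
      exact Finset.sum_congr rfl fun s' _ => by ring
    rw [e1, e2]
    ring
  constructor
  · rw [hdiff]
    apply mul_nonneg hγ0.le
    exact Finset.sum_nonneg (fun s' _ => mul_nonneg (hPpos _ _ _) (hd0 s'))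
  · rw [hdiff]
    have hstep : ∑ s', P p.1 p.2 s' * d s' ≤ ∑ s', P p.1 p.2 s' * (2 * K) := by
      apply Finset.sum_le_sum
      intro s' _
      apply mul_le_mul_of_nonneg_left _ (hPpos _ _ _)
      calc d s' ≤ 2 * (β s' * M s') := hdle s'
        _ ≤ 2 * K := by
            have : β s' * M s' ≤ K :=
              Finset.le_sup' (fun s' => β s' * M s') (Finset.mem_univ s')
            linarith
    calc γ * ∑ s', P p.1 p.2 s' * d s' ≤ γ * ∑ s', P p.1 p.2 s' * (2 * K) :=
          mul_le_mul_of_nonneg_left hstep hγ0.le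
      _ = 2 * γ * K := by
          rw [← Finset.sum_mul, hPsum]; ring
end

section
/- Let $B$ be an operator on $\mathbb{R}^N$ and $P$ an orthogonal projection onto a subspace $\mathcal{Q}$ with respect to an inner-product norm $\|\cdot\|$, such that the composition $PB$ is a $\gamma_c$-contraction in $\|\cdot\|$ with $\gamma_c \in (0,1)$. Let $\bar{Q}$ be a fixed point of $B$ and let $\hat{Q} \in \mathcal{Q}$ be the unique fixed point of $PB$. Then $\|\bar{Q} - \hat{Q}\| \le \frac{1}{\sqrt{1 - \gamma_c^2}} \|\bar{Q} - P\bar{Q}\|$. -/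
open RealInnerProductSpace

theorem stmt_15 {E : Type*} [NormedAddCommGroup E] [InnerProductSpace ℝ E]
    (Q : Submodule ℝ E) (B : E → E) (Pr : E → E)
    (hPmem : ∀ x, Pr x ∈ Q)
    (hPorth : ∀ x, ∀ q ∈ Q, ⟪x - Pr x, q⟫ = 0)
    (γc : ℝ) (hγc : γc ∈ Set.Ioo (0:ℝ) 1)
    (hcontr : ∀ x y, ‖Pr (B x) - Pr (B y)‖ ≤ γc * ‖x - y‖)
    (Qbar : E) (hQbar : B Qbar = Qbar)
    (Qhat : E) (hQhatmem : Qhat ∈ Q) (hQhat : Pr (B Qhat) = Qhat) :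
    ‖Qbar - Qhat‖ ≤ (1 / Real.sqrt (1 - γc ^ 2)) * ‖Qbar - Pr Qbar‖ := by
  obtain ⟨hγ0, hγ1⟩ := hγc
  have h1 : (0:ℝ) < 1 - γc ^ 2 := by nlinarith
  -- Pythagoras
  have hmem : Pr Qbar - Qhat ∈ Q := Q.sub_mem (hPmem Qbar) hQhatmem
  have horth : ⟪Qbar - Pr Qbar, Pr Qbar - Qhat⟫ = 0 := hPorth Qbar _ hmem
  have hdecomp : Qbar - Qhat = (Qbar - Pr Qbar) + (Pr Qbar - Qhat) := by abel
  have horth2 : ⟪Pr Qbar - Qhat, Qbar - Pr Qbar⟫ = 0 := by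
    rw [real_inner_comm]; exact horth
  have hpyth : ‖Qbar - Qhat‖ ^ 2 = ‖Qbar - Pr Qbar‖ ^ 2 + ‖Pr Qbar - Qhat‖ ^ 2 := by
    rw [hdecomp, ← real_inner_self_eq_norm_sq, ← real_inner_self_eq_norm_sq,
      ← real_inner_self_eq_norm_sq, inner_add_add_self, horth, horth2]
    ring
  have hc : ‖Pr Qbar - Qhat‖ ≤ γc * ‖Qbar - Qhat‖ := by
    have := hcontr Qbar Qhat
    rwa [hQbar, hQhat] at this
  have hsq : ‖Pr Qbar - Qhat‖ ^ 2 ≤ γc ^ 2 * ‖Qbar - Qhat‖ ^ 2 := by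
    have h0 : (0:ℝ) ≤ ‖Pr Qbar - Qhat‖ := norm_nonneg _
    nlinarith
  have key : (1 - γc ^ 2) * ‖Qbar - Qhat‖ ^ 2 ≤ ‖Qbar - Pr Qbar‖ ^ 2 := by nlinarith
  have hs : Real.sqrt (1 - γc ^ 2) > 0 := Real.sqrt_pos.mpr h1
  rw [div_mul_eq_mul_div, le_div_iff₀ hs, one_mul]
  have hsq2 : (‖Qbar - Qhat‖ * Real.sqrt (1 - γc ^ 2)) ^ 2 ≤ ‖Qbar - Pr Qbar‖ ^ 2 := by
    rw [mul_pow, Real.sq_sqrt h1.le]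
    nlinarith
  have h3 : 0 ≤ ‖Qbar - Qhat‖ * Real.sqrt (1 - γc ^ 2) := by positivity
  nlinarith [norm_nonneg (Qbar - Pr Qbar)]
end

section
/- Let $\Phi \in \mathbb{R}^{N \times d}$ have full column rank, let $K \in \mathbb{R}^{N\times N}$ be a positive-definite diagonal matrix, and let $F: \mathbb{R}^d \to \mathbb{R}^d$ be given by $\bar{F}(w) = \Phi^\top K (B(\Phi w) - \Phi w)$ where $B$ is a linear-affine operator such that $P B$ is a $\gamma_c$-contraction with respect to $\|x\|_K = (x^\top K x)^{1/2}$, $\gamma_c \in (0,1)$, with $P = \Phi(\Phi^\top K \Phi)^{-1}\Phi^\top K$ the $K$-orthogonal projection onto the column space of $\Phi$. Let $w^*$ be the unique solution of $\Phi w = PB(\Phi w)$ and let $\lambda_{\min} > 0$ be the minimum eigenvalue of $\Phi^\top K \Phi$. Then for all $w \in \mathbb{R}^d$, $(w - w^*)^\top \bar{F}(w) \le -(1-\gamma_c)\lambda_{\min}\|w - w^*\|_2^2$. -/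
/-!
Since `Φᵀ K (y - P y) = 0` and `Φ w* = P B (Φ w*)`, one has `F̄ w = Φᵀ K (z - x)` with
`x = Φ (w - w*)` and `z = P B (Φ w) - P B (Φ w*)`, so `(w - w*) ⬝ F̄ w = ⟪x, z⟫_K - ‖x‖_K²`.
Cauchy–Schwarz for `⟪·,·⟫_K` and the contraction `‖z‖_K ≤ γ ‖x‖_K` bound this by
`-(1 - γ) ‖x‖_K²`, and `‖x‖_K² = (w - w*) ⬝ Φᵀ K Φ (w - w*) ≥ λ_min ‖w - w*‖²`.
-/

open Finset Matrix

theorem Matrix.PosSemidef.dotProduct_mulVec_le_sqrt_mul_sqrt {n : Type*} [Fintype n]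
    {K : Matrix n n ℝ} (hK : K.PosSemidef) (x y : n → ℝ) :
    x ⬝ᵥ K *ᵥ y ≤ √(x ⬝ᵥ K *ᵥ x) * √(y ⬝ᵥ K *ᵥ y) := by
  let _ := K.toSeminormedAddCommGroup hK
  let _ := K.toInnerProductSpace hK
  have hinner (u v : n → ℝ) : inner ℝ u v = u ⬝ᵥ K *ᵥ v :=
    (dotProduct_comm _ _).trans (congrArg (· ⬝ᵥ K *ᵥ v) (star_trivial u))
  have hxx : 0 ≤ x ⬝ᵥ K *ᵥ x := by simpa using hK.dotProduct_mulVec_nonneg x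
  rw [← Real.sqrt_mul hxx]
  refine Real.le_sqrt_of_sq_le ?_
  simpa only [sq, hinner] using real_inner_mul_inner_self_le x y

theorem Matrix.dotProduct_transpose_mul_mul_mulVec {m n R : Type*} [Fintype m] [Fintype n]
    [CommSemiring R] (Φ : Matrix m n R) (K : Matrix m m R) (u : n → R) :
    u ⬝ᵥ (Φᵀ * K * Φ) *ᵥ u = Φ *ᵥ u ⬝ᵥ K *ᵥ (Φ *ᵥ u) := by
  rw [← mulVec_mulVec, ← mulVec_mulVec, dotProduct_transpose_mulVec, dotProduct_comm]

theorem Matrix.transpose_mulVec_mulVec_mulVec_inv_mulVec {m n R : Type*} [Fintype m] [Fintype n]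
    [DecidableEq n] [CommRing R] (Φ : Matrix m n R) (K : Matrix m m R)
    (h : IsUnit (Φᵀ * K * Φ).det) (u : n → R) :
    Φᵀ *ᵥ (K *ᵥ (Φ *ᵥ ((Φᵀ * K * Φ)⁻¹ *ᵥ u))) = u := by
  rw [mulVec_mulVec, mulVec_mulVec, mulVec_mulVec, mul_nonsing_inv _ h, one_mulVec]

theorem stmt_19_general {N d : ℕ}
    (Φ : Matrix (Fin N) (Fin d) ℝ)
    (hΦ : Function.Injective (fun w : Fin d → ℝ => Φ.mulVec w))
    (K : Matrix (Fin N) (Fin N) ℝ) (hKpos : K.PosDef)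
    (normK : (Fin N → ℝ) → ℝ)
    (hnormK : ∀ x, normK x = Real.sqrt (x ⬝ᵥ K.mulVec x))
    (Pr : (Fin N → ℝ) → (Fin N → ℝ))
    (hPr : ∀ v, Pr v = Φ.mulVec ((Φᵀ * K * Φ)⁻¹.mulVec (Φᵀ.mulVec (K.mulVec v))))
    (B : (Fin N → ℝ) → (Fin N → ℝ))
    (γc : ℝ) (hγc : γc ∈ Set.Ioo (0:ℝ) 1)
    (hcontr : ∀ v₁ v₂, normK (Pr (B v₁) - Pr (B v₂)) ≤ γc * normK (v₁ - v₂))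
    (Fbar : (Fin d → ℝ) → (Fin d → ℝ))
    (hFbar : ∀ w, Fbar w = Φᵀ.mulVec (K.mulVec (B (Φ.mulVec w) - Φ.mulVec w)))
    (wstar : Fin d → ℝ) (hwstar : Φ.mulVec wstar = Pr (B (Φ.mulVec wstar)))
    (lammin : ℝ)
    (hlam : ∀ v : Fin d → ℝ, lammin * (∑ i, (v i) ^ 2) ≤ v ⬝ᵥ (Φᵀ * K * Φ).mulVec v) :
    ∀ w : Fin d → ℝ,
      (fun i => w i - wstar i) ⬝ᵥ Fbar w
        ≤ -((1 - γc) * lammin * ∑ i, (w i - wstar i) ^ 2) := by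
  intro w
  have hA : (Φᵀ * K * Φ).PosDef := by
    simpa only [conjTranspose_eq_transpose_of_trivial] using hKpos.conjTranspose_mul_mul_same hΦ
  have hPrK (y : Fin N → ℝ) : Φᵀ *ᵥ (K *ᵥ Pr y) = Φᵀ *ᵥ (K *ᵥ y) := by
    rw [hPr, transpose_mulVec_mulVec_mulVec_inv_mulVec Φ K hA.det_pos.ne'.isUnit]
  set v : Fin d → ℝ := fun i => w i - wstar i
  set x := Φ *ᵥ v
  set z := Pr (B (Φ *ᵥ w)) - Pr (B (Φ *ᵥ wstar))
  have hx : x = Φ *ᵥ w - Φ *ᵥ wstar := mulVec_sub Φ w wstar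
  have hdrift : v ⬝ᵥ Fbar w = x ⬝ᵥ K *ᵥ z - x ⬝ᵥ K *ᵥ x := by
    have hres : Pr (B (Φ *ᵥ w)) - Φ *ᵥ w = z - x := by
      rw [hx, hwstar]; simp only [z]; abel
    rw [hFbar, mulVec_sub, mulVec_sub, ← hPrK (B _), ← mulVec_sub, ← mulVec_sub, hres,
      dotProduct_transpose_mulVec, dotProduct_comm, mulVec_sub, dotProduct_sub]
  have hcross : x ⬝ᵥ K *ᵥ z ≤ γc * (x ⬝ᵥ K *ᵥ x) := by
    have hxx : 0 ≤ x ⬝ᵥ K *ᵥ x := by simpa using hKpos.posSemidef.dotProduct_mulVec_nonneg x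
    calc x ⬝ᵥ K *ᵥ z ≤ normK x * normK z := by
          simpa only [hnormK] using hKpos.posSemidef.dotProduct_mulVec_le_sqrt_mul_sqrt x z
      _ ≤ normK x * (γc * normK x) := by
          rw [hx]; exact mul_le_mul_of_nonneg_left (hcontr _ _) (by rw [hnormK]; positivity)
      _ = γc * (normK x * normK x) := by ring
      _ = γc * (x ⬝ᵥ K *ᵥ x) := by rw [hnormK, Real.mul_self_sqrt hxx]
  have hcoercive : lammin * ∑ i, v i ^ 2 ≤ x ⬝ᵥ K *ᵥ x :=
    dotProduct_transpose_mul_mul_mulVec Φ K v ▸ hlam v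
  rw [hdrift]
  nlinarith [hγc.2]

theorem stmt_19 {N d : ℕ}
    (Φ : Matrix (Fin N) (Fin d) ℝ)
    (hΦ : Function.Injective (fun w : Fin d → ℝ => Φ.mulVec w))
    (K : Matrix (Fin N) (Fin N) ℝ) (hKdiag : K.IsDiag) (hKpos : K.PosDef)
    (normK : (Fin N → ℝ) → ℝ)
    (hnormK : ∀ x, normK x = Real.sqrt (x ⬝ᵥ K.mulVec x))
    (Pr : (Fin N → ℝ) → (Fin N → ℝ))
    (hPr : ∀ v, Pr v = Φ.mulVec ((Φᵀ * K * Φ)⁻¹.mulVec (Φᵀ.mulVec (K.mulVec v))))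
    (B : (Fin N → ℝ) → (Fin N → ℝ))
    (M : Matrix (Fin N) (Fin N) ℝ) (b : Fin N → ℝ)
    (hB : ∀ v, B v = M.mulVec v + b)
    (γc : ℝ) (hγc : γc ∈ Set.Ioo (0:ℝ) 1)
    (hcontr : ∀ v₁ v₂, normK (Pr (B v₁) - Pr (B v₂)) ≤ γc * normK (v₁ - v₂))
    (Fbar : (Fin d → ℝ) → (Fin d → ℝ))
    (hFbar : ∀ w, Fbar w = Φᵀ.mulVec (K.mulVec (B (Φ.mulVec w) - Φ.mulVec w)))
    (wstar : Fin d → ℝ) (hwstar : Φ.mulVec wstar = Pr (B (Φ.mulVec wstar)))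
    (lammin : ℝ) (hlampos : 0 < lammin)
    (hlam : ∀ v : Fin d → ℝ, lammin * (∑ i, (v i) ^ 2) ≤ v ⬝ᵥ (Φᵀ * K * Φ).mulVec v) :
    ∀ w : Fin d → ℝ,
      (fun i => w i - wstar i) ⬝ᵥ Fbar w
        ≤ -((1 - γc) * lammin * ∑ i, (w i - wstar i) ^ 2) :=
  stmt_19_general Φ hΦ K hKpos normK hnormK Pr hPr B γc hγc hcontr Fbar hFbar wstar hwstar lammin
    hlam
end
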